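/- For every integer N ≥ 2, the cubic polynomial P_N has a root z in the open interval (0, 2N²(N−1)/(3N+1)), i.e. there exists z with 0 < z < 2N²(N−1)/(3N+1) and P_N(z) = 0. -/

import Mathlib

/-!
`P_N(0) < 0` and `P_N(2N²(N−1)/(3N+1)) > 0`, so the intermediate value theorem gives a root in
between. Both signs become evident after the substitution `N = t + 2`: `-P_N(0)` and
`(3N+1)³ P_N(2N²(N−1)/(3N+1))` are polynomials in `t` with positive coefficients.
-/

def cubicP (N z : ℝ) : ℝ :=
  8 * N ^ 6 * z ^ 3
    + (-16 * N ^ 7 + 4 * N ^ 6 + 48 * N ^ 5 - 52 * N ^ 4 + 8 * N ^ 3 + 20 * N ^ 2 - 8 * N - 4)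
      * z ^ 2
    + (8 * N ^ 8 - 20 * N ^ 7 + 46 * N ^ 6 - 112 * N ^ 5 + 114 * N ^ 4 - 4 * N ^ 3 - 46 * N ^ 2
      + 8 * N + 6) * z
    - 9 * N ^ 8 + 48 * N ^ 7 - 100 * N ^ 6 + 96 * N ^ 5 - 30 * N ^ 4 - 16 * N ^ 3 + 12 * N ^ 2 - 1

theorem continuous_cubicP (N : ℝ) : Continuous (cubicP N) := by
  unfold cubicP
  fun_prop

theorem cubicP_add_two_zero (t : ℝ) :
    cubicP (t + 2) 0 = -(9 * t ^ 8 + 96 * t ^ 7 + 436 * t ^ 6 + 1104 * t ^ 5 + 1710 * t ^ 4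
      + 1664 * t ^ 3 + 996 * t ^ 2 + 336 * t + 49) := by
  unfold cubicP
  ring

theorem cubicP_add_two_upper {t : ℝ} (ht : 0 ≤ t) :
    cubicP (t + 2) (2 * (t + 2) ^ 2 * (t + 2 - 1) / (3 * (t + 2) + 1)) =
      (64 * t ^ 15 + 1536 * t ^ 14 + 16832 * t ^ 13 + 111448 * t ^ 12 + 497233 * t ^ 11
        + 1578327 * t ^ 10 + 3668387 * t ^ 9 + 6329117 * t ^ 8 + 8129418 * t ^ 7
        + 7723046 * t ^ 6 + 5337446 * t ^ 5 + 2605650 * t ^ 4 + 855925 * t ^ 3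
        + 174451 * t ^ 2 + 19111 * t + 841) / (3 * t + 7) ^ 3 := by
  unfold cubicP
  field_simp
  ring

theorem exists_add_two_eq {N : ℝ} (hN : 2 ≤ N) : ∃ t, 0 ≤ t ∧ N = t + 2 :=
  ⟨N - 2, by linarith, by ring⟩

theorem cubicP_zero_neg {N : ℝ} (hN : 2 ≤ N) : cubicP N 0 < 0 := by
  obtain ⟨t, ht, rfl⟩ := exists_add_two_eq hN
  rw [cubicP_add_two_zero, neg_lt_zero]
  positivity

theorem cubicP_upper_pos {N : ℝ} (hN : 2 ≤ N) :
    0 < cubicP N (2 * N ^ 2 * (N - 1) / (3 * N + 1)) := by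
  obtain ⟨t, ht, rfl⟩ := exists_add_two_eq hN
  rw [cubicP_add_two_upper ht]
  positivity

theorem cubic_has_root (N : ℕ) (hN : 2 ≤ N) :
    ∃ z : ℝ, 0 < z ∧ z < 2 * (N : ℝ) ^ 2 * ((N : ℝ) - 1) / (3 * (N : ℝ) + 1) ∧
      8 * (N : ℝ) ^ 6 * z ^ 3
        + (-16 * (N : ℝ) ^ 7 + 4 * (N : ℝ) ^ 6 + 48 * (N : ℝ) ^ 5 - 52 * (N : ℝ) ^ 4
            + 8 * (N : ℝ) ^ 3 + 20 * (N : ℝ) ^ 2 - 8 * (N : ℝ) - 4) * z ^ 2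
        + (8 * (N : ℝ) ^ 8 - 20 * (N : ℝ) ^ 7 + 46 * (N : ℝ) ^ 6 - 112 * (N : ℝ) ^ 5
            + 114 * (N : ℝ) ^ 4 - 4 * (N : ℝ) ^ 3 - 46 * (N : ℝ) ^ 2 + 8 * (N : ℝ) + 6) * z
        - 9 * (N : ℝ) ^ 8 + 48 * (N : ℝ) ^ 7 - 100 * (N : ℝ) ^ 6 + 96 * (N : ℝ) ^ 5
        - 30 * (N : ℝ) ^ 4 - 16 * (N : ℝ) ^ 3 + 12 * (N : ℝ) ^ 2 - 1 = 0 := by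
  have hN' : (2 : ℝ) ≤ N := by exact_mod_cast hN
  have hupper : 0 ≤ 2 * (N : ℝ) ^ 2 * ((N : ℝ) - 1) / (3 * (N : ℝ) + 1) :=
    div_nonneg (mul_nonneg (by positivity) (by linarith)) (by positivity)
  obtain ⟨z, ⟨hz_pos, hz_lt⟩, hz_root⟩ := intermediate_value_Ioo hupper
    (continuous_cubicP N).continuousOn ⟨cubicP_zero_neg hN', cubicP_upper_pos hN'⟩
  exact ⟨z, hz_pos, hz_lt, hz_root⟩
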